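/- For z, ζ in the open upper half-plane with |ζ| > 2|z| and |ζ| > 1, the modified Green function satisfies |G_m(z,ζ)| ≤ (1/π) ∑_{k=m+1}^{∞} k y η |z|^{k-1} / |ζ|^{1+k}, where y = Im z and η = Im ζ; in particular the series on the right converges. -/

import Mathlib

/-- The modified kernel `E_{m+1}` evaluated at `z - ζ` (its correction term depends on `ζ`). -/
noncomputable def Em1 (m : ℕ) (z ζ : ℂ) : ℝ :=
  1 / (2 * Real.pi) * Real.log (‖z - ζ‖) -
    (if 1 < ‖ζ‖ then
      1 / (2 * Real.pi) *
        (Complex.log ζ - ∑ k ∈ Finset.Icc 1 m, z ^ k / (k * ζ ^ k)).re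
    else 0)

/-- The modified Green function `G_m(z,ζ) = E_{m+1}(z-ζ) - E_{m+1}(z-ζ̄)`. -/
noncomputable def Gm (m : ℕ) (z ζ : ℂ) : ℝ :=
  Em1 m z ζ - Em1 m z (starRingEnd ℂ ζ)

/-!
Since `log |z - ζ| = log |ζ| + Re log (1 - z/ζ)`, the Taylor series of `log (1 - w)` at
`w = z/ζ` and `w = z/ζ̄` exhibits `-2π G_m(z,ζ)` as the tail `∑_{k>m} Re ((z/ζ)^k - (z/ζ̄)^k) / k`.
Each term equals `2 Im z^k Im ζ^k / (k |ζ|^{2k})` because `Re (u/v - u/v̄) = 2 Im u Im v / |v|²`,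
and `|Im w^k| ≤ k |Im w| |w|^{k-1}` bounds it by twice the `k`-th term of the majorant, which is
summable because `|z| < |ζ|`.
-/

open Complex ComplexConjugate

lemma abs_im_pow_succ_le (z : ℂ) (n : ℕ) :
    |(z ^ (n + 1)).im| ≤ (n + 1) * |z.im| * ‖z‖ ^ n := by
  induction n with
  | zero => simp
  | succ n ih =>
    calc |(z ^ (n + 1 + 1)).im|
        = |z.re * (z ^ (n + 1)).im + z.im * (z ^ (n + 1)).re| := by
          rw [pow_succ', mul_im]
      _ ≤ |z.re| * |(z ^ (n + 1)).im| + |z.im| * |(z ^ (n + 1)).re| := by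
          rw [← abs_mul, ← abs_mul]
          exact abs_add_le _ _
      _ ≤ ‖z‖ * ((n + 1) * |z.im| * ‖z‖ ^ n) + |z.im| * ‖z‖ ^ (n + 1) := by
          gcongr
          · exact abs_re_le_norm z
          · exact (abs_re_le_norm _).trans (norm_pow z _).le
      _ = ((n + 1 : ℕ) + 1) * |z.im| * ‖z‖ ^ (n + 1) := by push_cast; ring

lemma re_div_sub_div_conj (u v : ℂ) :
    (u / v - u / conj v).re = 2 * u.im * v.im / ‖v‖ ^ 2 := by
  rw [Complex.sq_norm]
  simp only [sub_re, div_re, normSq_conj, conj_re, conj_im]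
  ring

lemma sum_Icc_div_mul_pow_eq_sum_range (m : ℕ) (z ζ : ℂ) :
    ∑ k ∈ Finset.Icc 1 m, z ^ k / (k * ζ ^ k) = ∑ k ∈ Finset.range (m + 1), (z / ζ) ^ k / k := by
  -- the `k = 0` term on the right is `(z / ζ) ^ 0 / 0 = 0`
  rw [Finset.range_eq_Ico, Finset.sum_eq_sum_Ico_succ_bot (by omega : 0 < m + 1), zero_add,
    Finset.Ico_add_one_right_eq_Icc, Nat.cast_zero, div_zero, zero_add]
  simp only [div_pow, div_div, mul_comm]

lemma hasSum_neg_log_one_sub_tail (m : ℕ) {w : ℂ} (hw : ‖w‖ < 1) :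
    HasSum (fun j : ℕ => w ^ (j + m + 1) / ((j + m + 1 : ℕ) : ℂ))
      (-log (1 - w) - ∑ k ∈ Finset.range (m + 1), w ^ k / k) := by
  simpa only [← add_assoc] using (hasSum_nat_add_iff' (m + 1)).mpr (hasSum_taylorSeries_neg_log hw)

lemma hasSum_Em1 (m : ℕ) {z ζ : ℂ} (h1 : 1 < ‖ζ‖) (hlt : ‖z‖ < ‖ζ‖) :
    HasSum (fun j : ℕ => ((z / ζ) ^ (j + m + 1) / ((j + m + 1 : ℕ) : ℂ)).re)
      (-(2 * Real.pi) * Em1 m z ζ) := by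
  have hζ : ζ ≠ 0 := norm_pos_iff.mp (by linarith)
  have hw : ‖z / ζ‖ < 1 := by rwa [norm_div, div_lt_one (by linarith)]
  have h1w : 1 - z / ζ ≠ 0 := fun h => by
    rw [← sub_eq_zero.mp h, norm_one] at hw; exact lt_irrefl _ hw
  have hsub : z - ζ = -ζ * (1 - z / ζ) := by field_simp; ring
  have hlog : Real.log ‖z - ζ‖ = Real.log ‖ζ‖ + (log (1 - z / ζ)).re := by
    rw [hsub, norm_mul, norm_neg, Real.log_mul (norm_ne_zero_iff.mpr hζ)
      (norm_ne_zero_iff.mpr h1w), log_re]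
  convert hasSum_re (hasSum_neg_log_one_sub_tail m hw) using 1
  have hπ : 2 * Real.pi ≠ 0 := by positivity
  rw [Em1, if_pos h1, hlog, sum_Icc_div_mul_pow_eq_sum_range, sub_re, sub_re, neg_re, log_re ζ,
    mul_sub, ← mul_assoc, ← mul_assoc, neg_mul, neg_mul, mul_one_div_cancel hπ]
  ring

lemma hasSum_Gm (m : ℕ) {z ζ : ℂ} (h1 : 1 < ‖ζ‖) (hlt : ‖z‖ < ‖ζ‖) :
    HasSum (fun j : ℕ => 2 * (z ^ (j + m + 1)).im * (ζ ^ (j + m + 1)).im /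
        ‖ζ ^ (j + m + 1)‖ ^ 2 / ((j + m + 1 : ℕ) : ℝ))
      (-(2 * Real.pi) * Gm m z ζ) := by
  have hconj := hasSum_Em1 m (z := z) (ζ := conj ζ) (by rwa [norm_conj]) (by rwa [norm_conj])
  rw [Gm, mul_sub]
  refine ((hasSum_Em1 m h1 hlt).sub hconj).congr_fun fun j => ?_
  rw [← sub_re, div_pow, div_pow, ← map_pow, ← sub_div, div_natCast_re, re_div_sub_div_conj]

lemma abs_im_pow_mul_im_pow_div_le (z : ℂ) {ζ : ℂ} (hζ : ζ ≠ 0) (n : ℕ) :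
    |2 * (z ^ (n + 1)).im * (ζ ^ (n + 1)).im / ‖ζ ^ (n + 1)‖ ^ 2 / ((n + 1 : ℕ) : ℝ)|
      ≤ 2 * (((n + 1 : ℕ) : ℝ) * |z.im| * |ζ.im| * ‖z‖ ^ n / ‖ζ‖ ^ (n + 2)) := by
  have hR : 0 < ‖ζ‖ := norm_pos_iff.mpr hζ
  simp only [abs_div, abs_mul, abs_two, abs_pow, abs_norm, Nat.abs_cast, norm_pow]
  calc 2 * |(z ^ (n + 1)).im| * |(ζ ^ (n + 1)).im| / (‖ζ‖ ^ (n + 1)) ^ 2 / ((n + 1 : ℕ) : ℝ)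
      ≤ 2 * ((n + 1) * |z.im| * ‖z‖ ^ n) * ((n + 1) * |ζ.im| * ‖ζ‖ ^ n) /
          (‖ζ‖ ^ (n + 1)) ^ 2 / ((n + 1 : ℕ) : ℝ) := by
        gcongr <;> exact abs_im_pow_succ_le _ n
    _ = _ := by field_simp; push_cast; ring

lemma summable_succ_mul_pow_div_pow {r R : ℝ} (hr : 0 ≤ r) (hrR : r < R) :
    Summable (fun n : ℕ => ((n + 1 : ℕ) : ℝ) * r ^ n / R ^ (n + 2)) := by
  have hR : 0 < R := hr.trans_lt hrR
  have hq : ‖r / R‖ < 1 := by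
    rwa [Real.norm_eq_abs, abs_of_nonneg (by positivity), div_lt_one hR]
  have hsum := (hasSum_coe_mul_geometric_of_norm_lt_one hq).summable.add
    (summable_geometric_of_norm_lt_one hq)
  refine (hsum.mul_left (1 / R ^ 2)).congr fun n => ?_
  rw [div_pow]
  field_simp
  push_cast
  ring

theorem stmt7 (m : ℕ) (z ζ : ℂ) (hz : 0 < z.im) (hζ : 0 < ζ.im)
    (h1 : 1 < ‖ζ‖) (h2 : 2 * ‖z‖ < ‖ζ‖) :
    Summable (fun k : ℕ =>
      ((k + m + 1 : ℕ) : ℝ) * z.im * ζ.im * ‖z‖ ^ (k + m) /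
        ‖ζ‖ ^ (k + m + 2)) ∧
    |Gm m z ζ| ≤
      1 / Real.pi * ∑' k : ℕ,
        ((k + m + 1 : ℕ) : ℝ) * z.im * ζ.im * ‖z‖ ^ (k + m) /
          ‖ζ‖ ^ (k + m + 2) := by
  have hlt : ‖z‖ < ‖ζ‖ := by linarith [norm_nonneg z]
  have hζ0 : ζ ≠ 0 := norm_pos_iff.mp (by linarith)
  set t : ℕ → ℝ := fun k =>
    ((k + m + 1 : ℕ) : ℝ) * z.im * ζ.im * ‖z‖ ^ (k + m) / ‖ζ‖ ^ (k + m + 2)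
  have ht : Summable t :=
    (((summable_nat_add_iff m).mpr (summable_succ_mul_pow_div_pow (norm_nonneg z) hlt)).mul_left
      (z.im * ζ.im)).congr fun k => by simp only [t]; ring
  refine ⟨ht, ?_⟩
  have hbound : ‖-(2 * Real.pi) * Gm m z ζ‖ ≤ ∑' k, 2 * t k :=
    (hasSum_Gm m h1 hlt).norm_le_of_bounded (ht.mul_left 2).hasSum fun k => by
      simpa only [Real.norm_eq_abs, abs_of_pos hz, abs_of_pos hζ] using
        abs_im_pow_mul_im_pow_div_le z hζ0 (k + m)
  rw [tsum_mul_left, Real.norm_eq_abs, abs_mul, abs_neg, abs_of_pos (by positivity)] at hbound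
  rw [one_div_mul_eq_div, le_div_iff₀ Real.pi_pos]
  linarith
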